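/- Let q be a complex number with |q| < 1 such that q^m ≠ −1 for all m ≥ 1. Then Σ_{n=1}^∞ q^n / (−q^n; q)_∞ = 1 − (q; q²)_∞. -/

import Mathlib

open scoped BigOperators

/-- The finite q-Pochhammer symbol `(a; q)_n = ∏_{m=0}^{n-1} (1 - a q^m)`. -/
noncomputable def qPoch (a q : ℂ) (n : ℕ) : ℂ := ∏ m ∈ Finset.range n, (1 - a * q ^ m)

/-- The infinite q-Pochhammer symbol `(a; q)_∞ = ∏_{m=0}^{∞} (1 - a q^m)`. -/
noncomputable def qPochInf (a q : ℂ) : ℂ := ∏' m : ℕ, (1 - a * q ^ m)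

/-!
Write `T = (-q; q)_∞`. Splitting off the first `n` factors gives
`q^(n+1) / (-q^(n+1); q)_∞ = q^(n+1) (-q; q)_n / T`, and
`q^(n+1) (-q; q)_n = (-q; q)_(n+1) - (-q; q)_n`, so the series telescopes to `1 - 1/T`.
Euler's identity `(q; q²)_∞ · T = 1` finishes the proof; it follows from
`(q; q)_∞ = (q; q²)_∞ (q²; q²)_∞` (even and odd factors) and `(q; q)_∞ T = (q²; q²)_∞`,
after cancelling the nonzero factor `(q²; q²)_∞`.
-/

open Filter Topology

section QPochhammer

variable {q : ℂ}

lemma summable_norm_mul_pow (a : ℂ) (hq : ‖q‖ < 1) : Summable fun m : ℕ => ‖a * q ^ m‖ := by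
  simpa [norm_mul, norm_pow] using (summable_geometric_of_lt_one (norm_nonneg q) hq).mul_left ‖a‖

lemma multipliable_one_sub_mul_pow (a : ℂ) (hq : ‖q‖ < 1) :
    Multipliable fun m : ℕ => 1 - a * q ^ m := by
  simpa only [sub_eq_add_neg] using
    multipliable_one_add_of_summable (f := fun m : ℕ => -(a * q ^ m))
      (by simpa only [norm_neg] using summable_norm_mul_pow a hq)

lemma qPochInf_ne_zero {a : ℂ} (hq : ‖q‖ < 1) (ha : ∀ m : ℕ, a * q ^ m ≠ 1) :
    qPochInf a q ≠ 0 := by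
  simpa only [qPochInf, sub_eq_add_neg] using
    tprod_one_add_ne_zero_of_summable (f := fun m : ℕ => -(a * q ^ m))
      (fun m => by simpa only [← sub_eq_add_neg, sub_ne_zero] using (ha m).symm)
      (by simpa only [norm_neg] using summable_norm_mul_pow a hq)

lemma qPoch_succ (a q : ℂ) (n : ℕ) : qPoch a q (n + 1) = qPoch a q n * (1 - a * q ^ n) :=
  Finset.prod_range_succ _ n

lemma tendsto_qPoch_qPochInf (a : ℂ) (hq : ‖q‖ < 1) :
    Tendsto (qPoch a q) atTop (𝓝 (qPochInf a q)) :=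
  (multipliable_one_sub_mul_pow a hq).hasProd.tendsto_prod_nat

lemma qPoch_mul_qPochInf (a : ℂ) (hq : ‖q‖ < 1) (n : ℕ) :
    qPoch a q n * qPochInf (a * q ^ n) q = qPochInf a q := by
  have hshift : (fun m : ℕ => 1 - a * q ^ (m + n)) = fun m => 1 - a * q ^ n * q ^ m := by
    ext m; ring
  have h := Multipliable.prod_mul_tprod_nat_mul' (f := fun m : ℕ => 1 - a * q ^ m) (k := n)
    (hshift ▸ multipliable_one_sub_mul_pow (a * q ^ n) hq)
  rwa [hshift] at h

lemma hasSum_mul_pow_mul_qPoch (a : ℂ) (hq : ‖q‖ < 1) :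
    HasSum (fun n : ℕ => a * q ^ n * qPoch a q n) (1 - qPochInf a q) := by
  obtain ⟨M, hM⟩ := (tendsto_qPoch_qPochInf a hq).norm.bddAbove_range
  have hsum : Summable fun n : ℕ => a * q ^ n * qPoch a q n := by
    refine .of_norm_bounded ((summable_norm_mul_pow a hq).mul_right M) fun n => ?_
    rw [norm_mul]
    gcongr
    exact hM (Set.mem_range_self n)
  have htelescope (n : ℕ) : a * q ^ n * qPoch a q n = qPoch a q n - qPoch a q (n + 1) := by
    rw [qPoch_succ]; ring
  have hpartial (N : ℕ) : ∑ n ∈ Finset.range N, a * q ^ n * qPoch a q n = 1 - qPoch a q N := by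
    rw [Finset.sum_congr rfl fun n _ => htelescope n, Finset.sum_range_sub']
    rfl
  rw [hsum.hasSum_iff_tendsto_nat, funext hpartial]
  exact tendsto_const_nhds.sub (tendsto_qPoch_qPochInf a hq)

lemma qPochInf_mul_qPochInf_neg (a : ℂ) (hq : ‖q‖ < 1) :
    qPochInf a q * qPochInf (-a) q = qPochInf (a ^ 2) (q ^ 2) := by
  rw [qPochInf, qPochInf, ← (multipliable_one_sub_mul_pow a hq).tprod_mul
    (multipliable_one_sub_mul_pow (-a) hq), qPochInf]
  exact tprod_congr fun m => by ring

lemma qPochInf_eq_mul_qPochInf_sq (a : ℂ) (hq : ‖q‖ < 1) :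
    qPochInf a q = qPochInf a (q ^ 2) * qPochInf (a * q) (q ^ 2) := by
  have hq2 : ‖q ^ 2‖ < 1 := by rw [norm_pow]; exact pow_lt_one₀ (norm_nonneg q) hq two_ne_zero
  have heven : (fun k : ℕ => 1 - a * q ^ (2 * k)) = fun k => 1 - a * (q ^ 2) ^ k := by
    simp only [pow_mul]
  have hodd : (fun k : ℕ => 1 - a * q ^ (2 * k + 1)) = fun k => 1 - a * q * (q ^ 2) ^ k := by
    ext k; rw [pow_succ, pow_mul]; ring
  rw [qPochInf, qPochInf, qPochInf, ← tprod_even_mul_odd (f := fun m : ℕ => 1 - a * q ^ m)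
    (heven ▸ multipliable_one_sub_mul_pow a hq2)
    (hodd ▸ multipliable_one_sub_mul_pow (a * q) hq2), heven, hodd]

lemma qPochInf_sq_mul_qPochInf_neg_eq_one (hq : ‖q‖ < 1) :
    qPochInf q (q ^ 2) * qPochInf (-q) q = 1 := by
  have hq2 : ‖q ^ 2‖ < 1 := by rw [norm_pow]; exact pow_lt_one₀ (norm_nonneg q) hq two_ne_zero
  have hne : qPochInf (q ^ 2) (q ^ 2) ≠ 0 := by
    refine qPochInf_ne_zero hq2 fun m h => ?_
    have := congrArg norm h
    rw [← pow_succ', norm_pow, norm_one] at this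
    exact (pow_lt_one₀ (norm_nonneg _) hq2 m.succ_ne_zero).ne this
  have h := qPochInf_mul_qPochInf_neg q hq
  rw [qPochInf_eq_mul_qPochInf_sq q hq, ← sq] at h
  apply mul_left_cancel₀ hne
  linear_combination h

end QPochhammer

theorem euler_type_identity_general (q : ℂ) (hq : ‖q‖ < 1) :
    (∑' n : ℕ, q ^ (n + 1) / qPochInf (-q ^ (n + 1)) q) = 1 - qPochInf q (q ^ 2) := by
  have hEuler := qPochInf_sq_mul_qPochInf_neg_eq_one hq
  have hT : qPochInf (-q) q ≠ 0 := right_ne_zero_of_mul_eq_one hEuler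
  have hterm (n : ℕ) : q ^ (n + 1) / qPochInf (-q ^ (n + 1)) q =
      -(-q * q ^ n * qPoch (-q) q n) / qPochInf (-q) q := by
    have h := qPoch_mul_qPochInf (-q) hq n
    rw [neg_mul, ← pow_succ'] at h
    have hne : qPochInf (-q ^ (n + 1)) q ≠ 0 := right_ne_zero_of_mul (h ▸ hT)
    rw [div_eq_div_iff hne hT, ← h, pow_succ']
    ring
  rw [tsum_congr hterm, tsum_div_const, tsum_neg, (hasSum_mul_pow_mul_qPoch (-q) hq).tsum_eq,
    eq_inv_of_mul_eq_one_left hEuler]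
  field_simp
  ring

theorem euler_type_identity (q : ℂ) (hq : ‖q‖ < 1)
    (h : ∀ m : ℕ, q ^ (m + 1) ≠ -1) :
    (∑' n : ℕ, q ^ (n + 1) / qPochInf (-q ^ (n + 1)) q) = 1 - qPochInf q (q ^ 2) :=
  euler_type_identity_general q hq
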